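/- Let S = {s₁, …, sₙ} be generators and R a set of words of the form s_i^{ε_i} s_j^{ε_j} s_k^{ε_k} with ε ∈ {−1,1}. For each such relator r, let φ_r be the 3CNF formula (x_i^{ε_i} ∨ x_j^{ε_j} ∨ x_k^{ε_k}) ∧ (x_i^{−ε_i} ∨ x_j^{−ε_j} ∨ x_k^{−ε_k}), where x^1 = x and x^{−1} = ¬x, and let Φ_R be the conjunction of all φ_r for r ∈ R. If the group Γ = ⟨S | R⟩ is left-orderable and no generator s_i maps to the identity of Γ, then Φ_R is satisfiable. -/

import Mathlib

/-!
Send each variable `x_i` to the sign of the generator `s_i` in a left order of `Γ`; since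
`s_i ≠ 1`, the literal `x_i^{ε}` is true exactly when `s_i^{ε} > 1`. In a left-ordered group
a product of three positive (or three negative) elements is positive (negative), so a relator
`s_i^{ε_i} s_j^{ε_j} s_k^{ε_k} = 1` has factors of both signs: both clauses of `φ_r` hold.
-/

/-- A length-3 relator: an ordered triple of signed generators
`s_i^{ε_i} s_j^{ε_j} s_k^{ε_k}`, where `true` stands for exponent `+1`. -/
abbrev Rel3 (n : ℕ) := (Fin n × Bool) × (Fin n × Bool) × (Fin n × Bool)

/-- The signed generator `s_i^{ε}` in the free group. -/
def sgen {n : ℕ} (p : Fin n × Bool) : FreeGroup (Fin n) :=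
  if p.2 then FreeGroup.of p.1 else (FreeGroup.of p.1)⁻¹

/-- The word `s_i^{ε_i} s_j^{ε_j} s_k^{ε_k}` in the free group. -/
def word3 {n : ℕ} (r : Rel3 n) : FreeGroup (Fin n) :=
  sgen r.1 * sgen r.2.1 * sgen r.2.2

/-- The value of the literal `x_i^{ε}` (`x^1 = x`, `x^{-1} = ¬x`) under `η`. -/
def lit {n : ℕ} (η : Fin n → Bool) (p : Fin n × Bool) : Bool :=
  η p.1 == p.2

/-- `η` satisfies
`φ_r = (x_i^{ε_i} ∨ x_j^{ε_j} ∨ x_k^{ε_k}) ∧ (x_i^{-ε_i} ∨ x_j^{-ε_j} ∨ x_k^{-ε_k})`. -/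
def satPhi {n : ℕ} (η : Fin n → Bool) (r : Rel3 n) : Bool :=
  (lit η r.1 || lit η r.2.1 || lit η r.2.2) &&
    (!lit η r.1 || !lit η r.2.1 || !lit η r.2.2)

section LeftOrdered

variable {G : Type*} [Group G] [LinearOrder G] [MulLeftMono G]

theorem not_one_lt_of_mul_mul_eq_one {a b c : G} (h : a * b * c = 1) :
    ¬(1 < a ∧ 1 < b ∧ 1 < c) := fun ⟨ha, hb, hc⟩ =>
  (Left.one_lt_mul (Left.one_lt_mul ha hb) hc).ne' h

theorem not_lt_one_of_mul_mul_eq_one {a b c : G} (h : a * b * c = 1) :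
    ¬(a < 1 ∧ b < 1 ∧ c < 1) := fun ⟨ha, hb, hc⟩ =>
  (Left.mul_lt_one (Left.mul_lt_one ha hb) hc).ne h

variable {n : ℕ} (φ : FreeGroup (Fin n) →* G)

def signAssignment (i : Fin n) : Bool :=
  decide (1 < φ (FreeGroup.of i))

variable {φ}

theorem lit_signAssignment_iff (hφ : ∀ i, φ (FreeGroup.of i) ≠ 1) (u : Fin n × Bool) :
    lit (signAssignment φ) u = true ↔ 1 < φ (sgen u) := by
  obtain ⟨i, _ | _⟩ := u
  · simpa [lit, signAssignment, sgen] using (hφ i).le_iff_lt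
  · simp [lit, signAssignment, sgen]

theorem lit_signAssignment_eq_false_iff (hφ : ∀ i, φ (FreeGroup.of i) ≠ 1)
    (u : Fin n × Bool) : lit (signAssignment φ) u = false ↔ φ (sgen u) < 1 := by
  have hu : φ (sgen u) ≠ 1 := by
    unfold sgen; split_ifs <;> simpa using hφ u.1
  rw [Bool.eq_false_iff, ne_eq, lit_signAssignment_iff hφ, not_lt, hu.le_iff_lt]

theorem satPhi_signAssignment (hφ : ∀ i, φ (FreeGroup.of i) ≠ 1) (r : Rel3 n)
    (hr : φ (word3 r) = 1) : satPhi (signAssignment φ) r = true := by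
  obtain ⟨p, q, s⟩ := r
  have habc : φ (sgen p) * φ (sgen q) * φ (sgen s) = 1 := by
    simpa only [word3, map_mul] using hr
  cases hp : lit (signAssignment φ) p <;> cases hq : lit (signAssignment φ) q <;>
    cases hs : lit (signAssignment φ) s <;> simp only [satPhi, hp, hq, hs] <;> try rfl
  · exact (not_lt_one_of_mul_mul_eq_one habc
      ⟨(lit_signAssignment_eq_false_iff hφ p).1 hp, (lit_signAssignment_eq_false_iff hφ q).1 hq,
        (lit_signAssignment_eq_false_iff hφ s).1 hs⟩).elim
  · exact (not_one_lt_of_mul_mul_eq_one habc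
      ⟨(lit_signAssignment_iff hφ p).1 hp, (lit_signAssignment_iff hφ q).1 hq,
        (lit_signAssignment_iff hφ s).1 hs⟩).elim

end LeftOrdered

/-- If `Γ = ⟨S | R⟩` (all relators of length 3) is left-orderable and no
generator maps to the identity of `Γ`, then `Φ_R` is satisfiable. -/
theorem stmt_3 {n : ℕ} (R : Set (Rel3 n))
    (hLO : ∃ lo : LinearOrder (PresentedGroup (word3 '' R)),
      ∀ a b g : PresentedGroup (word3 '' R), lo.le a b → lo.le (g * a) (g * b))
    (hgen : ∀ i : Fin n, (PresentedGroup.of i : PresentedGroup (word3 '' R)) ≠ 1) :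
    ∃ η : Fin n → Bool, ∀ r ∈ R, satPhi η r = true := by
  obtain ⟨lo, hmul⟩ := hLO
  have : MulLeftMono (PresentedGroup (word3 '' R)) := ⟨fun g a b h => hmul a b g h⟩
  exact ⟨signAssignment (PresentedGroup.mk (word3 '' R)), fun r hr =>
    satPhi_signAssignment hgen r (PresentedGroup.one_of_mem ⟨r, hr, rfl⟩)⟩
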